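/- Assume the utility functional U satisfies the upper Fatou property and the risk functional R satisfies the lower Fatou property. If either U is sensitive to large losses, or R is positively star-shaped and sensitive to large losses, then (U,R)-portfolio selection is market-independent well posed: for every market X and every R̃ ∈ [0, ∞), the supremum sup{ U(X_π) : π ∈ ℝ^d, R(X_π) ≤ R̃ } is attained by some π* ∈ ℝ^d. -/

import Mathlib

open MeasureTheory Filter
open scoped ENNReal

namespace URPaper

variable {Ω : Type*} [MeasurableSpace Ω]

/-- The payoff `π · X` of the portfolio `π` in the market `X`. -/
def port {d : ℕ} (X : Fin d → Ω → ℝ) (π : Fin d → ℝ) : Ω → ℝ :=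
  fun ω => ∑ i, π i * X i ω

/-- The scaled position `l • Y`. -/
def scale (l : ℝ) (Y : Ω → ℝ) : Ω → ℝ := fun ω => l * Y ω

/-- A functional is increasing (with respect to the a.s. order on `L¹`). -/
def MonoInc (μ : Measure Ω) (U : (Ω → ℝ) → EReal) : Prop :=
  ∀ Y Z : Ω → ℝ, Integrable Y μ → Integrable Z μ →
    (∀ᵐ ω ∂μ, Y ω ≤ Z ω) → U Y ≤ U Z

/-- A functional is decreasing (with respect to the a.s. order on `L¹`). -/
def MonoDec (μ : Measure Ω) (R : (Ω → ℝ) → EReal) : Prop :=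
  ∀ Y Z : Ω → ℝ, Integrable Y μ → Integrable Z μ →
    (∀ᵐ ω ∂μ, Y ω ≤ Z ω) → R Z ≤ R Y

/-- `U(∞)`: the limit of `U` along deterministic constants `y → ∞`
(equal to the supremum, since `U` is increasing along constants). -/
noncomputable def limConst (U : (Ω → ℝ) → EReal) : EReal := ⨆ y : ℝ, U (fun _ => y)

/-- A utility functional: increasing, normalized, `[-∞,∞)`-valued,
and satisfying `U(Y) < U(∞)` for all `Y ∈ L¹`. -/
structure IsUtility (μ : Measure Ω) (U : (Ω → ℝ) → EReal) : Prop where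
  mono : MonoInc μ U
  norm : U (fun _ => (0 : ℝ)) = 0
  ne_top : ∀ Y : Ω → ℝ, Integrable Y μ → U Y ≠ ⊤
  non_sat : ∀ Y : Ω → ℝ, Integrable Y μ → U Y < limConst U

/-- A risk functional: decreasing, normalized, `(-∞,∞]`-valued. -/
structure IsRisk (μ : Measure Ω) (R : (Ω → ℝ) → EReal) : Prop where
  mono : MonoDec μ R
  norm : R (fun _ => (0 : ℝ)) = 0
  ne_bot : ∀ Y : Ω → ℝ, Integrable Y μ → R Y ≠ ⊥

/-- Positive star-shapedness: `R(λY) ≥ λ R(Y)` for `λ > 1`. -/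
def PosStarShaped (μ : Measure Ω) (R : (Ω → ℝ) → EReal) : Prop :=
  ∀ Y : Ω → ℝ, Integrable Y μ → ∀ l : ℝ, 1 < l → (l : EReal) * R Y ≤ R (scale l Y)

/-- The lower Fatou property. -/
def LowerFatou (μ : Measure Ω) (R : (Ω → ℝ) → EReal) : Prop :=
  ∀ (Yn : ℕ → Ω → ℝ) (Y Z : Ω → ℝ), (∀ n, Integrable (Yn n) μ) →
    Integrable Y μ → Integrable Z μ →
    (∀ᵐ ω ∂μ, Tendsto (fun n => Yn n ω) atTop (nhds (Y ω))) →
    (∀ n, ∀ᵐ ω ∂μ, |Yn n ω| ≤ Z ω) →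
    R Y ≤ Filter.liminf (fun n => R (Yn n)) atTop

/-- The upper Fatou property. -/
def UpperFatou (μ : Measure Ω) (U : (Ω → ℝ) → EReal) : Prop :=
  ∀ (Yn : ℕ → Ω → ℝ) (Y Z : Ω → ℝ), (∀ n, Integrable (Yn n) μ) →
    Integrable Y μ → Integrable Z μ →
    (∀ᵐ ω ∂μ, Tendsto (fun n => Yn n ω) atTop (nhds (Y ω))) →
    (∀ n, ∀ᵐ ω ∂μ, |Yn n ω| ≤ Z ω) →
    Filter.limsup (fun n => U (Yn n)) atTop ≤ U Y

/-- Sensitivity to large losses for a risk functional. -/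
def SensLLRisk (μ : Measure Ω) (R : (Ω → ℝ) → EReal) : Prop :=
  ∀ Y : Ω → ℝ, Integrable Y μ → 0 < μ {ω | Y ω < 0} →
    ∃ l₀ : ℝ, 0 < l₀ ∧ ∀ l : ℝ, l₀ < l → 0 < R (scale l Y)

/-- Sensitivity to large losses for a utility functional. -/
def SensLLUtility (μ : Measure Ω) (U : (Ω → ℝ) → EReal) : Prop :=
  ∀ Y : Ω → ℝ, Integrable Y μ → 0 < μ {ω | Y ω < 0} →
    ∃ l₀ : ℝ, 0 < l₀ ∧ ∀ l : ℝ, l₀ < l → U (scale l Y) < 0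

/-- Weak sensitivity to large losses for a utility functional. -/
def WeakSensLLUtility (μ : Measure Ω) (U : (Ω → ℝ) → EReal) : Prop :=
  ∀ Y : Ω → ℝ, Integrable Y μ → 0 < μ {ω | Y ω < 0} →
    Filter.limsup (fun l : ℝ => U (scale l Y)) atTop < limConst U

/-- Sensitivity equivalence for a utility functional. -/
def SensEquivUtility (μ : Measure Ω) (U : (Ω → ℝ) → EReal) : Prop :=
  WeakSensLLUtility μ U ↔ SensLLUtility μ U

/-- Law-invariance of a functional on `L¹`. -/
def LawInvariant (μ : Measure Ω) (H : (Ω → ℝ) → EReal) : Prop :=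
  ∀ Y Z : Ω → ℝ, Integrable Y μ → Integrable Z μ →
    ProbabilityTheory.IdentDistrib Y Z μ μ → H Y = H Z

/-- Cash-additivity: `H(Y + c) = H(Y) + H(c)` for constants `c`. -/
def CashAdditive (μ : Measure Ω) (H : (Ω → ℝ) → EReal) : Prop :=
  ∀ Y : Ω → ℝ, Integrable Y μ → ∀ c : ℝ,
    H (fun ω => Y ω + c) = H Y + H (fun _ => c)

/-- Cash-convexity of a risk functional. -/
def CashConvex (μ : Measure Ω) (R : (Ω → ℝ) → EReal) : Prop :=
  ∀ Y : Ω → ℝ, Integrable Y μ → ∀ c l : ℝ, 0 < l → l < 1 →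
    R (fun ω => l * Y ω + (1 - l) * c) ≤
      (l : EReal) * R Y + ((1 - l : ℝ) : EReal) * R (fun _ => c)

/-- Cash-concavity of a utility functional. -/
def CashConcave (μ : Measure Ω) (U : (Ω → ℝ) → EReal) : Prop :=
  ∀ Y : Ω → ℝ, Integrable Y μ → ∀ c l : ℝ, 0 < l → l < 1 →
    (l : EReal) * U Y + ((1 - l : ℝ) : EReal) * U (fun _ => c) ≤
      U (fun ω => l * Y ω + (1 - l) * c)

/-- Strict quasi-concavity of a utility functional. -/
def StrictQuasiConcave (μ : Measure Ω) (U : (Ω → ℝ) → EReal) : Prop :=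
  ∀ Y Z : Ω → ℝ, Integrable Y μ → Integrable Z μ → 0 < μ {ω | Y ω ≠ Z ω} →
    ∀ l : ℝ, 0 < l → l < 1 →
      min (U Y) (U Z) < U (fun ω => l * Y ω + (1 - l) * Z ω)

/-- Quasi-convexity of a risk functional. -/
def QuasiConvex (μ : Measure Ω) (R : (Ω → ℝ) → EReal) : Prop :=
  ∀ Y Z : Ω → ℝ, Integrable Y μ → Integrable Z μ → ∀ l : ℝ, 0 < l → l < 1 →
    R (fun ω => l * Y ω + (1 - l) * Z ω) ≤ max (R Y) (R Z)

/-- An atomless measure. -/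
def Atomless (μ : Measure Ω) : Prop :=
  ∀ s : Set Ω, MeasurableSet s → μ s ≠ 0 →
    ∃ t : Set Ω, t ⊆ s ∧ MeasurableSet t ∧ 0 < μ t ∧ μ t < μ s

/-- A market: a finite tuple of integrable payoffs, non-redundant
(linearly independent in `L¹`) and arbitrage-free. -/
structure IsMarket (μ : Measure Ω) {d : ℕ} (X : Fin d → Ω → ℝ) : Prop where
  integrable : ∀ i, Integrable (X i) μ
  nonredundant : ∀ π : Fin d → ℝ, (∀ᵐ ω ∂μ, port X π ω = 0) → π = 0
  no_arbitrage : ¬∃ π : Fin d → ℝ,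
      (∀ᵐ ω ∂μ, 0 ≤ port X π ω) ∧ 0 < μ {ω | 0 < port X π ω}

/-- `(U,R)`-portfolio selection is weakly well posed for the market `X`. -/
def WeaklyWellPosedFor (U R : (Ω → ℝ) → EReal) {d : ℕ} (X : Fin d → Ω → ℝ) : Prop :=
  ∀ Rmax : ℝ, 0 ≤ Rmax →
    (⨆ π : {π : Fin d → ℝ // R (port X π) ≤ (Rmax : EReal)}, U (port X π.1)) < limConst U

/-- `(U,R)`-portfolio selection is well posed for the market `X`:
the supremum is attained by some portfolio. -/
def WellPosedFor (U R : (Ω → ℝ) → EReal) {d : ℕ} (X : Fin d → Ω → ℝ) : Prop :=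
  ∀ Rmax : ℝ, 0 ≤ Rmax →
    ∃ πs : Fin d → ℝ, R (port X πs) ≤ (Rmax : EReal) ∧
      ∀ π : Fin d → ℝ, R (port X π) ≤ (Rmax : EReal) → U (port X π) ≤ U (port X πs)

/-- Market-independent weak well-posedness. -/
def MIWeaklyWellPosed (μ : Measure Ω) (U R : (Ω → ℝ) → EReal) : Prop :=
  ∀ (d : ℕ), 0 < d → ∀ X : Fin d → Ω → ℝ, IsMarket μ X → WeaklyWellPosedFor U R X

/-- Market-independent well-posedness. -/
def MIWellPosed (μ : Measure Ω) (U R : (Ω → ℝ) → EReal) : Prop :=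
  ∀ (d : ℕ), 0 < d → ∀ X : Fin d → Ω → ℝ, IsMarket μ X → WellPosedFor U R X

/-- The market `X` admits `(U,R)`-arbitrage. -/
def URArbitrage (U R : (Ω → ℝ) → EReal) {d : ℕ} (X : Fin d → Ω → ℝ) : Prop :=
  ∃ (π : ℕ → Fin d → ℝ) (Rt : ℝ), 0 ≤ Rt ∧
    Tendsto (fun n => U (port X (π n))) atTop (nhds (limConst U)) ∧
    ∀ n, R (port X (π n)) ≤ (Rt : EReal)

/-- The terminal payoff `θ · S̄₁` of a portfolio `θ` in a normalized market model
with interest rate `r` and risky payoffs `S`. -/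
def mmPayoff {d : ℕ} (r : ℝ) (S : Fin d → Ω → ℝ) (θ : Fin (d + 1) → ℝ) : Ω → ℝ :=
  fun ω => θ 0 * (1 + r) + ∑ i : Fin d, θ i.succ * S i ω

/-- A normalized, arbitrage-free and non-redundant market model with `d` risky assets:
all initial prices are `1`, asset `0` is riskless with payoff `1 + r`. -/
structure MarketModel (μ : Measure Ω) (d : ℕ) where
  r : ℝ
  hr : -1 < r
  S : Fin d → Ω → ℝ
  integrable : ∀ i, Integrable (S i) μ
  nonredundant : ∀ θ : Fin (d + 1) → ℝ, (∀ᵐ ω ∂μ, mmPayoff r S θ ω = 0) → θ = 0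
  no_arbitrage : ¬∃ θ : Fin (d + 1) → ℝ, (∑ j, θ j) ≤ 0 ∧
    (∀ᵐ ω ∂μ, 0 ≤ mmPayoff r S θ ω) ∧ 0 < μ {ω | 0 < mmPayoff r S θ ω}

/-- The terminal payoff `θ · S̄₁`. -/
def payoff {μ : Measure Ω} {d : ℕ} (M : MarketModel μ d) (θ : Fin (d + 1) → ℝ) : Ω → ℝ :=
  mmPayoff M.r M.S θ

/-- The initial cost `θ · S̄₀` (all initial prices are normalized to `1`). -/
def cost {μ : Measure Ω} {d : ℕ} (_M : MarketModel μ d) (θ : Fin (d + 1) → ℝ) : ℝ :=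
  ∑ j, θ j

/-- The positive part of an extended real number, as an element of `ℝ≥0∞`. -/
noncomputable def posPart (x : EReal) : ℝ≥0∞ :=
  if x = ⊤ then ⊤ else ENNReal.ofReal x.toReal

/-- The expected utility `E[u(Y)]` of a position `Y`, as an extended real number. -/
noncomputable def expEU (μ : Measure Ω) (u : ℝ → EReal) (Y : Ω → ℝ) : EReal :=
  ((∫⁻ ω, posPart (u (Y ω)) ∂μ : ℝ≥0∞) : EReal) -
    ((∫⁻ ω, posPart (-(u (Y ω))) ∂μ : ℝ≥0∞) : EReal)

/-- A utility function: increasing, normalized, `[-∞,∞)`-valued, non-satiated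
(`u(∞) > u(z)` for all `z`), and of at most linear growth at `+∞`
(`limsup_{y→∞} u(y)/y < ∞`). -/
structure IsUtilityFun (u : ℝ → EReal) : Prop where
  mono : Monotone u
  norm : u 0 = 0
  ne_top : ∀ y : ℝ, u y ≠ ⊤
  non_sat : ∀ z : ℝ, u z < ⨆ y : ℝ, u y
  growth : ∃ a : ℝ, ∀ᶠ y in (atTop : Filter ℝ), u y ≤ ((a * y : ℝ) : EReal)

/-- `u` is unbounded (its range is not contained in any bounded interval of `ℝ`). -/
def UnboundedFun (u : ℝ → EReal) : Prop :=
  ¬∃ C : ℝ, ∀ y : ℝ, ((-C : ℝ) : EReal) ≤ u y ∧ u y ≤ ((C : ℝ) : EReal)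

/-- `u` is negatively star-shaped on `ℝ₊`: `u(λy) ≤ λ u(y)` for `y ≥ 0`, `λ ≥ 1`. -/
def NegStarShapedPos (u : ℝ → EReal) : Prop :=
  ∀ y : ℝ, 0 ≤ y → ∀ l : ℝ, 1 ≤ l → u (l * y) ≤ (l : EReal) * u y

/-- The asymptotic loss-gain ratio `ALG(u) = limsup_{y→∞} u(-y)/u(y)`. -/
noncomputable def ALG (u : ℝ → EReal) : EReal :=
  Filter.limsup (fun y : ℝ => u (-y) / u y) atTop

/-- Strict concavity of a `[-∞,∞)`-valued utility function. -/
def StrictConcaveFun (u : ℝ → EReal) : Prop :=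
  ∀ y z : ℝ, y ≠ z → ∀ l : ℝ, 0 < l → l < 1 →
    (l : EReal) * u y + ((1 - l : ℝ) : EReal) * u z < u (l * y + (1 - l) * z)



section Stmt8Aux

set_option linter.unusedSectionVars false

lemma port_zero {d : ℕ} (X : Fin d → Ω → ℝ) : port X 0 = fun _ => (0:ℝ) := by
  funext ω; simp [port]

lemma port_integrable {d : ℕ} {X : Fin d → Ω → ℝ} {μ : Measure Ω}
    (hXi : ∀ i, Integrable (X i) μ) (π : Fin d → ℝ) : Integrable (port X π) μ := by
  have : port X π = fun ω => ∑ i ∈ Finset.univ, π i * X i ω := rfl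
  rw [this]
  exact integrable_finset_sum _ fun i _ => (hXi i).const_mul (π i)

lemma sumabs_integrable {d : ℕ} {X : Fin d → Ω → ℝ} {μ : Measure Ω}
    (hXi : ∀ i, Integrable (X i) μ) : Integrable (fun ω => ∑ i, |X i ω|) μ :=
  integrable_finset_sum _ fun i _ => (hXi i).abs

lemma abs_port_le {d : ℕ} (X : Fin d → Ω → ℝ) (π : Fin d → ℝ) (ω : Ω) :
    |port X π ω| ≤ ‖π‖ * ∑ i, |X i ω| := by
  calc |port X π ω| ≤ ∑ i, |π i * X i ω| := Finset.abs_sum_le_sum_abs _ _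
    _ ≤ ∑ i, ‖π‖ * |X i ω| := by
        refine Finset.sum_le_sum fun i _ => ?_
        rw [abs_mul]
        exact mul_le_mul_of_nonneg_right (by simpa using norm_le_pi_norm π i) (abs_nonneg _)
    _ = ‖π‖ * ∑ i, |X i ω| := by rw [Finset.mul_sum]

lemma port_smul_apply {d : ℕ} (X : Fin d → Ω → ℝ) (c : ℝ) (π : Fin d → ℝ) (ω : Ω) :
    port X (c • π) ω = c * port X π ω := by
  simp [port, Finset.mul_sum, mul_assoc]

lemma port_sub_apply {d : ℕ} (X : Fin d → Ω → ℝ) (π π' : Fin d → ℝ) (ω : Ω) :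
    port X (π - π') ω = port X π ω - port X π' ω := by
  simp [port, sub_mul, Finset.sum_sub_distrib]

lemma port_tendsto {d : ℕ} (X : Fin d → Ω → ℝ) {πn : ℕ → Fin d → ℝ} {π : Fin d → ℝ}
    (hconv : Tendsto πn atTop (nhds π)) (ω : Ω) :
    Tendsto (fun n => port X (πn n) ω) atTop (nhds (port X π ω)) := by
  unfold port
  exact tendsto_finset_sum _ fun i _ => ((tendsto_pi_nhds.mp hconv i).mul_const (X i ω))

/-- Upper semicontinuity of `π ↦ U (port X π)` along a convergent sequence. -/
lemma usc_portU {μ : Measure Ω} {U : (Ω → ℝ) → EReal} (huf : UpperFatou μ U)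
    {d : ℕ} {X : Fin d → Ω → ℝ} (hXi : ∀ i, Integrable (X i) μ)
    {πn : ℕ → Fin d → ℝ} {π : Fin d → ℝ} (hconv : Tendsto πn atTop (nhds π)) :
    Filter.limsup (fun n => U (port X (πn n))) atTop ≤ U (port X π) := by
  obtain ⟨C, hC⟩ := (hconv.norm.bddAbove_range)
  have hC' : ∀ n, ‖πn n‖ ≤ C := fun n => hC (Set.mem_range_self n)
  refine huf (fun n => port X (πn n)) (port X π) (fun ω => C * ∑ i, |X i ω|)
    (fun n => port_integrable hXi _) (port_integrable hXi _)
    ((sumabs_integrable hXi).const_mul C)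
    (Filter.Eventually.of_forall fun ω => port_tendsto X hconv ω)
    (fun n => Filter.Eventually.of_forall fun ω => ?_)
  calc |port X (πn n) ω| ≤ ‖πn n‖ * ∑ i, |X i ω| := abs_port_le X _ ω
    _ ≤ C * ∑ i, |X i ω| :=
        mul_le_mul_of_nonneg_right (hC' n)
          (Finset.sum_nonneg fun i _ => abs_nonneg _)

/-- Lower semicontinuity of `π ↦ R (port X π)` along a convergent sequence. -/
lemma lsc_portR {μ : Measure Ω} {R : (Ω → ℝ) → EReal} (hlf : LowerFatou μ R)
    {d : ℕ} {X : Fin d → Ω → ℝ} (hXi : ∀ i, Integrable (X i) μ)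
    {πn : ℕ → Fin d → ℝ} {π : Fin d → ℝ} (hconv : Tendsto πn atTop (nhds π)) :
    R (port X π) ≤ Filter.liminf (fun n => R (port X (πn n))) atTop := by
  obtain ⟨C, hC⟩ := (hconv.norm.bddAbove_range)
  have hC' : ∀ n, ‖πn n‖ ≤ C := fun n => hC (Set.mem_range_self n)
  refine hlf (fun n => port X (πn n)) (port X π) (fun ω => C * ∑ i, |X i ω|)
    (fun n => port_integrable hXi _) (port_integrable hXi _)
    ((sumabs_integrable hXi).const_mul C)
    (Filter.Eventually.of_forall fun ω => port_tendsto X hconv ω)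
    (fun n => Filter.Eventually.of_forall fun ω => ?_)
  calc |port X (πn n) ω| ≤ ‖πn n‖ * ∑ i, |X i ω| := abs_port_le X _ ω
    _ ≤ C * ∑ i, |X i ω| :=
        mul_le_mul_of_nonneg_right (hC' n)
          (Finset.sum_nonneg fun i _ => abs_nonneg _)

/-- If `(πₙ)` has norms growing at least linearly, an accumulation point of the
normalized directions yields an integrable `Y` with `ℙ[Y<0] > 0` dominating the
payoffs: for every `L` there are `n` and `l > L` with `port X πₙ ≤ l • Y`. -/
lemma exists_badY {μ : Measure Ω} {d : ℕ} {X : Fin d → Ω → ℝ} (hX : IsMarket μ X)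
    (πn : ℕ → Fin d → ℝ) (hn : ∀ n : ℕ, (n : ℝ) ≤ ‖πn n‖) :
    ∃ Y : Ω → ℝ, Integrable Y μ ∧ 0 < μ {ω | Y ω < 0} ∧
      ∀ L : ℝ, ∃ n, ∃ l : ℝ, L < l ∧ ∀ ω, port X (πn n) ω ≤ l * Y ω := by
  have hXi := hX.integrable
  have hnormpos : ∀ m : ℕ, (0:ℝ) < ‖πn (m+1)‖ := fun m =>
    lt_of_lt_of_le (by exact_mod_cast Nat.succ_pos m) (hn (m+1))
  set ρ : ℕ → Fin d → ℝ := fun m => ‖πn (m+1)‖⁻¹ • πn (m+1) with hρ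
  have hρnorm : ∀ m, ‖ρ m‖ = 1 := by
    intro m
    rw [hρ, norm_smul, norm_inv, norm_norm, inv_mul_cancel₀ (hnormpos m).ne']
  have hρball : ∀ m, ρ m ∈ Metric.closedBall (0 : Fin d → ℝ) 1 := fun m => by
    rw [Metric.mem_closedBall, dist_zero_right, hρnorm m]
  obtain ⟨a, _, φ, hφ, hρconv⟩ :=
    (isCompact_closedBall (0 : Fin d → ℝ) 1).tendsto_subseq hρball
  have hanorm : ‖a‖ = 1 := by
    have h1 : Tendsto (fun m => ‖ρ (φ m)‖) atTop (nhds ‖a‖) := hρconv.norm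
    have h2 : Tendsto (fun m => ‖ρ (φ m)‖) atTop (nhds 1) := by
      simpa [hρnorm] using (tendsto_const_nhds : Tendsto (fun _ : ℕ => (1:ℝ)) atTop _)
    exact tendsto_nhds_unique h1 h2
  have hneg : 0 < μ {ω | port X a ω < 0} := by
    by_contra h'
    have h0 : μ {ω | port X a ω < 0} = 0 := le_zero_iff.mp (not_lt.mp h')
    have hae1 : ∀ᵐ ω ∂μ, 0 ≤ port X a ω := by
      rw [ae_iff]; simpa [not_le] using h0
    have hpos : μ {ω | 0 < port X a ω} = 0 := by
      by_contra hp
      exact hX.no_arbitrage ⟨a, hae1, pos_iff_ne_zero.mpr hp⟩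
    have hae2 : ∀ᵐ ω ∂μ, port X a ω ≤ 0 := by
      rw [ae_iff]; simpa [not_le] using hpos
    have : a = 0 := hX.nonredundant a
      (hae1.mp (hae2.mono fun ω h2 h1 => le_antisymm h2 h1))
    rw [this] at hanorm; simp at hanorm
  obtain ⟨k, hk⟩ : ∃ k : ℕ, 0 < μ {ω | port X a ω < -(1/(k+1))} := by
    by_contra h'
    push_neg at h'
    have hz : ∀ k : ℕ, μ {ω | port X a ω < -(1/(k+1))} = 0 :=
      fun k => le_zero_iff.mp (h' k)
    have hsub : {ω | port X a ω < 0} ⊆ ⋃ k : ℕ, {ω | port X a ω < -(1/(k+1))} := by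
      intro ω hω
      have hω' : (0:ℝ) < -port X a ω := neg_pos.mpr hω
      obtain ⟨k, hk⟩ := exists_nat_one_div_lt hω'
      exact Set.mem_iUnion.mpr ⟨k, by simp only [Set.mem_setOf_eq]; linarith⟩
    exact absurd (le_trans (measure_mono hsub) (le_of_eq (measure_iUnion_null hz)))
      (by simpa using hneg.ne')
  set η : ℝ := 1/(k+1) with hη
  have hηpos : 0 < η := by positivity
  obtain ⟨K, hK⟩ : ∃ K : ℕ,
      0 < μ {ω | port X a ω < -η ∧ (∑ i, |X i ω|) ≤ K} := by
    by_contra h'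
    push_neg at h'
    have hz : ∀ K : ℕ, μ {ω | port X a ω < -η ∧ (∑ i, |X i ω|) ≤ K} = 0 :=
      fun K => le_zero_iff.mp (h' K)
    have hsub : {ω | port X a ω < -η} ⊆
        ⋃ K : ℕ, {ω | port X a ω < -η ∧ (∑ i, |X i ω|) ≤ K} := by
      intro ω hω
      obtain ⟨K, hKw⟩ := exists_nat_ge (∑ i, |X i ω|)
      exact Set.mem_iUnion.mpr ⟨K, hω, hKw⟩
    exact absurd (le_trans (measure_mono hsub) (le_of_eq (measure_iUnion_null hz)))
      (by simpa using hk.ne')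
  set ε : ℝ := η / (2 * (K + 1)) with hε
  have hεpos : 0 < ε := by positivity
  refine ⟨fun ω => port X a ω + ε * ∑ i, |X i ω|,
    (port_integrable hXi a).add ((sumabs_integrable hXi).const_mul ε), ?_, ?_⟩
  · refine lt_of_lt_of_le hK (measure_mono ?_)
    rintro ω ⟨h1, h2⟩
    have hb : ε * ∑ i, |X i ω| ≤ ε * K := mul_le_mul_of_nonneg_left h2 hεpos.le
    have : ε * (K:ℝ) ≤ η / 2 := by
      rw [hε, div_mul_eq_mul_div, div_le_div_iff₀ (by positivity) (by norm_num)]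
      nlinarith [hηpos.le]
    show port X a ω + ε * ∑ i, |X i ω| < 0
    linarith
  · intro L
    obtain ⟨N₁, hN₁⟩ := (Metric.tendsto_atTop.mp hρconv) ε hεpos
    set m : ℕ := max N₁ (⌈max L 0⌉₊ + 1) with hm
    refine ⟨φ m + 1, ‖πn (φ m + 1)‖, ?_, ?_⟩
    · have h1 : (m : ℝ) ≤ ‖πn (φ m + 1)‖ := by
        calc (m:ℝ) ≤ (φ m : ℝ) := by exact_mod_cast hφ.le_apply
          _ ≤ ((φ m + 1 : ℕ) : ℝ) := by push_cast; linarith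
          _ ≤ ‖πn (φ m + 1)‖ := hn _
      have hcm : ⌈max L 0⌉₊ < m := lt_of_lt_of_le (Nat.lt_succ_self _) (le_max_right N₁ _)
      have h2 : max L 0 < (m:ℝ) := lt_of_le_of_lt (Nat.le_ceil _) (by exact_mod_cast hcm)
      have := le_max_left L 0
      linarith
    · intro ω
      set l : ℝ := ‖πn (φ m + 1)‖ with hl
      have hlpos : 0 < l := hnormpos (φ m)
      have hrw : port X (πn (φ m + 1)) ω = l * port X (ρ (φ m)) ω := by
        rw [hρ]
        simp only [port_smul_apply]
        rw [← mul_assoc, mul_inv_cancel₀ hlpos.ne', one_mul]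
      have hdist : ‖ρ (φ m) - a‖ ≤ ε := by
        have := hN₁ m (le_max_left _ _)
        rw [dist_eq_norm] at this
        exact this.le
      have hbound : port X (ρ (φ m)) ω ≤ port X a ω + ε * ∑ i, |X i ω| := by
        have h1 : port X (ρ (φ m)) ω - port X a ω = port X (ρ (φ m) - a) ω :=
          (port_sub_apply X _ _ ω).symm
        have h2 : port X (ρ (φ m) - a) ω ≤ ‖ρ (φ m) - a‖ * ∑ i, |X i ω| :=
          le_trans (le_abs_self _) (abs_port_le X _ ω)
        have h3 : ‖ρ (φ m) - a‖ * ∑ i, |X i ω| ≤ ε * ∑ i, |X i ω| :=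
          mul_le_mul_of_nonneg_right hdist (Finset.sum_nonneg fun i _ => abs_nonneg _)
        linarith
      rw [hrw]
      exact mul_le_mul_of_nonneg_left hbound hlpos.le

/-- For `r > 0` in `EReal` and a real `Rmax` there is `t > 1` with `s * r > Rmax`
for all `s ≥ t`. -/
lemma exists_scale_gt (r : EReal) (hr : 0 < r) (Rmax : ℝ) :
    ∃ t : ℝ, 1 < t ∧ ∀ s : ℝ, t ≤ s → (Rmax : EReal) < (s : EReal) * r := by
  by_cases htop : r = ⊤
  · refine ⟨2, one_lt_two, fun s hs => ?_⟩
    rw [htop, EReal.mul_top_of_pos (by exact_mod_cast (by linarith : (0:ℝ) < s))]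
    exact EReal.coe_lt_top Rmax
  · have hbot : r ≠ ⊥ := ne_of_gt (lt_of_le_of_lt bot_le hr)
    have hco' : ((r.toReal : ℝ) : EReal) = r := EReal.coe_toReal htop hbot
    have hrr : 0 < r.toReal := EReal.coe_pos.mp (by rw [hco']; exact hr)
    refine ⟨max 2 ((|Rmax|+1)/r.toReal), lt_of_lt_of_le one_lt_two (le_max_left _ _),
      fun s hs => ?_⟩
    have hco : r = ((r.toReal : ℝ) : EReal) := (EReal.coe_toReal htop hbot).symm
    rw [hco, ← EReal.coe_mul]
    have hs2 : (|Rmax|+1)/r.toReal ≤ s := le_trans (le_max_right _ _) hs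
    have : |Rmax| + 1 ≤ s * r.toReal := by
      rw [div_le_iff₀ hrr] at hs2
      linarith
    exact_mod_cast (by nlinarith [le_abs_self Rmax] : Rmax < s * r.toReal)

/-- Attainment of the maximum of `π ↦ U (port X π)` on a norm-bounded
feasible set, via compactness and the Fatou (semicontinuity) properties. -/
lemma exists_max {μ : Measure Ω} {U R : (Ω → ℝ) → EReal}
    (huf : UpperFatou μ U) (hlf : LowerFatou μ R)
    {d : ℕ} {X : Fin d → Ω → ℝ} (hXi : ∀ i, Integrable (X i) μ)
    (M Rmax : ℝ) (h0 : ‖(0 : Fin d → ℝ)‖ ≤ M ∧ R (port X 0) ≤ (Rmax : EReal)) :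
    ∃ πs : Fin d → ℝ, ‖πs‖ ≤ M ∧ R (port X πs) ≤ (Rmax : EReal) ∧
      ∀ π : Fin d → ℝ, ‖π‖ ≤ M → R (port X π) ≤ (Rmax : EReal) →
        U (port X π) ≤ U (port X πs) := by
  set P : (Fin d → ℝ) → Prop := fun π => ‖π‖ ≤ M ∧ R (port X π) ≤ (Rmax : EReal) with hP
  set S : Set EReal := Set.range (fun p : {π // P π} => U (port X p.1)) with hS
  have hSne : S.Nonempty := ⟨_, ⟨⟨0, h0⟩, rfl⟩⟩
  have hSbdd : BddAbove S := OrderTop.bddAbove S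
  obtain ⟨u, humono, hutend, humem⟩ := exists_seq_tendsto_sSup hSne hSbdd
  choose p hp using fun n => humem n
  have hball : ∀ n, (p n).1 ∈ Metric.closedBall (0 : Fin d → ℝ) M := fun n => by
    rw [Metric.mem_closedBall, dist_zero_right]; exact (p n).2.1
  obtain ⟨πs, hπs_mem, φ, hφ, hconv⟩ :=
    (isCompact_closedBall (0 : Fin d → ℝ) M).tendsto_subseq hball
  have hπsnorm : ‖πs‖ ≤ M := by
    rwa [Metric.mem_closedBall, dist_zero_right] at hπs_mem
  have hconv' : Tendsto (fun m => (p (φ m)).1) atTop (nhds πs) := hconv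
  have hRπs : R (port X πs) ≤ (Rmax : EReal) := by
    refine le_trans (lsc_portR hlf hXi hconv') ?_
    refine le_trans liminf_le_limsup ?_
    exact limsup_le_of_le (h := Filter.Eventually.of_forall fun m => (p (φ m)).2.2)
  have hsup_le : sSup S ≤ U (port X πs) := by
    have hvals : Tendsto (fun m => U (port X (p (φ m)).1)) atTop (nhds (sSup S)) := by
      refine (hutend.comp hφ.tendsto_atTop).congr fun m => ?_
      exact (hp (φ m)).symm
    have heq : Filter.limsup (fun m => U (port X (p (φ m)).1)) atTop = sSup S :=
      hvals.limsup_eq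
    rw [← heq]
    exact usc_portU huf hXi hconv'
  refine ⟨πs, hπsnorm, hRπs, fun π h1 h2 => ?_⟩
  exact le_trans (le_sSup (show U (port X π) ∈ S from ⟨⟨π, h1, h2⟩, rfl⟩)) hsup_le

end Stmt8Aux

/-- under the upper/lower Fatou properties, if `U` is sensitive to large
losses, or `R` is positively star-shaped and sensitive to large losses, then
`(U,R)`-portfolio selection is market-independent well posed. -/
theorem stmt8 {Ω : Type*} [MeasurableSpace Ω] (μ : Measure Ω) [IsProbabilityMeasure μ]
    (U R : (Ω → ℝ) → EReal) (hU : IsUtility μ U) (hR : IsRisk μ R)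
    (huf : UpperFatou μ U) (hlf : LowerFatou μ R)
    (h : SensLLUtility μ U ∨ (PosStarShaped μ R ∧ SensLLRisk μ R)) :
    MIWellPosed μ U R := by
  intro d _hd X hX Rmax hRmax
  have hXi := hX.integrable
  have hp0 : port X 0 = fun _ => (0:ℝ) := port_zero X
  have hU0 : U (port X 0) = 0 := by rw [hp0, hU.norm]
  have hR0 : R (port X 0) ≤ (Rmax : EReal) := by
    rw [hp0, hR.norm]; exact_mod_cast hRmax
  rcases h with hsU | ⟨hstar, hsR⟩
  · -- U sensitive to large losses
    have hbound : ∃ M : ℝ, 0 ≤ M ∧ ∀ π : Fin d → ℝ, 0 ≤ U (port X π) → ‖π‖ ≤ M := by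
      by_contra h'
      push_neg at h'
      have hsel : ∀ n : ℕ, ∃ π : Fin d → ℝ, 0 ≤ U (port X π) ∧ (n:ℝ) < ‖π‖ := by
        intro n
        obtain ⟨π, hπ1, hπ2⟩ := h' n (Nat.cast_nonneg n)
        exact ⟨π, hπ1, hπ2⟩
      choose πn hπn1 hπn2 using hsel
      obtain ⟨Y, hYint, hYneg, hYdom⟩ := exists_badY hX πn (fun n => (hπn2 n).le)
      obtain ⟨l₀, hl₀pos, hl₀⟩ := hsU Y hYint hYneg
      obtain ⟨n, l, hLl, hdom⟩ := hYdom l₀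
      have h1 : U (port X (πn n)) ≤ U (scale l Y) :=
        hU.mono _ _ (port_integrable hXi _) (hYint.const_mul l)
          (Filter.Eventually.of_forall hdom)
      exact absurd (hπn1 n) (not_le.mpr (lt_of_le_of_lt h1 (hl₀ l hLl)))
    obtain ⟨M, hM0, hMb⟩ := hbound
    obtain ⟨πs, _hπs1, hπs2, hπsmax⟩ :=
      exists_max huf hlf hXi M Rmax ⟨by simpa using hM0, hR0⟩
    refine ⟨πs, hπs2, fun π hπR => ?_⟩
    by_cases hcase : ‖π‖ ≤ M
    · exact hπsmax π hcase hπR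
    · have hlt : U (port X π) < 0 := not_le.mp (fun hge => hcase (hMb π hge))
      have h0le : U (port X 0) ≤ U (port X πs) := hπsmax 0 (by simpa using hM0) hR0
      rw [hU0] at h0le
      exact le_trans hlt.le h0le
  · -- R positively star-shaped and sensitive to large losses
    have hbound : ∃ M : ℝ, 0 ≤ M ∧
        ∀ π : Fin d → ℝ, R (port X π) ≤ (Rmax : EReal) → ‖π‖ ≤ M := by
      by_contra h'
      push_neg at h'
      have hsel : ∀ n : ℕ, ∃ π : Fin d → ℝ,
          R (port X π) ≤ (Rmax : EReal) ∧ (n:ℝ) < ‖π‖ := by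
        intro n
        obtain ⟨π, hπ1, hπ2⟩ := h' n (Nat.cast_nonneg n)
        exact ⟨π, hπ1, hπ2⟩
      choose πn hπn1 hπn2 using hsel
      obtain ⟨Y, hYint, hYneg, hYdom⟩ := exists_badY hX πn (fun n => (hπn2 n).le)
      obtain ⟨l₀, hl₀pos, hl₀⟩ := hsR Y hYint hYneg
      set l₁ : ℝ := l₀ + 1 with hl₁
      have hl₁pos : 0 < l₁ := by linarith
      have hrpos : 0 < R (scale l₁ Y) := hl₀ l₁ (by linarith)
      obtain ⟨t, ht1, htR⟩ := exists_scale_gt _ hrpos Rmax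
      obtain ⟨n, l, hLl, hdom⟩ := hYdom (t * l₁)
      have hts : t ≤ l / l₁ := (le_div_iff₀ hl₁pos).mpr hLl.le
      have h1gt : (1:ℝ) < l / l₁ := lt_of_lt_of_le ht1 hts
      have hmono : R (scale l Y) ≤ R (port X (πn n)) :=
        hR.mono _ _ (port_integrable hXi _) (hYint.const_mul l)
          (Filter.Eventually.of_forall hdom)
      have hscale : scale (l/l₁) (scale l₁ Y) = scale l Y := by
        funext ω
        show (l/l₁) * (l₁ * Y ω) = l * Y ω
        field_simp
      have hstar' : ((l/l₁ : ℝ) : EReal) * R (scale l₁ Y) ≤ R (scale l Y) := by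
        rw [← hscale]
        exact hstar _ (hYint.const_mul l₁) _ h1gt
      have hgt : (Rmax : EReal) < R (port X (πn n)) :=
        lt_of_lt_of_le (htR (l/l₁) hts) (le_trans hstar' hmono)
      exact absurd (hπn1 n) (not_le.mpr hgt)
    obtain ⟨M, hM0, hMb⟩ := hbound
    obtain ⟨πs, _hπs1, hπs2, hπsmax⟩ :=
      exists_max huf hlf hXi M Rmax ⟨by simpa using hM0, hR0⟩
    exact ⟨πs, hπs2, fun π hπR => hπsmax π (hMb π hπR) hπR⟩


end URPaper
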